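/- Let 𝕋_t be a triod evolving by curvature on [0,T) with fixed endpoints P¹,P²,P³, and fix x₀ ∈ ℝ². With P̃^i_{x₀,𝔱} = (P^i − x₀)/√(2(T−t(𝔱))), t(𝔱) = T − e^{−2𝔱}, and ρ̃(x) = exp(−|x|²/2), for every index i ∈ {1,2,3} and every 𝔱, |∫_𝔱^{+∞} ⟨P̃^i_{x₀,ξ}, τ^i(1,t(ξ))⟩ ρ̃(P̃^i_{x₀,ξ}) dξ| ≤ √(π/2); consequently, for every x₀ ∈ ℝ² with x₀ ≠ P^i for all i, lim_{𝔱→+∞} Σ_{i=1}^3 ∫_𝔱^{+∞} ⟨P̃^i_{x₀,ξ}, τ^i(1,t(ξ))⟩ ρ̃(P̃^i_{x₀,ξ}) dξ = 0, and the bound √(π/2) holds for every x₀. -/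

import Mathlib

noncomputable section

open Set Filter Metric MeasureTheory Real
open scoped Topology ENNReal NNReal

/-- The Euclidean plane. -/
abbrev E2 : Type := EuclideanSpace ℝ (Fin 2)

/-- Counterclockwise rotation by `π/2` centered at the origin. -/
def rot (v : E2) : E2 := (WithLp.equiv 2 (Fin 2 → ℝ)).symm ![-(v 1), v 0]

/-- Spatial derivative `γ_x` of a one-parameter family of curves. -/
def dX (γ : ℝ → ℝ → E2) (x t : ℝ) : E2 := deriv (fun y => γ y t) x

/-- Second spatial derivative `γ_xx`. -/
def dXX (γ : ℝ → ℝ → E2) (x t : ℝ) : E2 := deriv (fun y => dX γ y t) x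

/-- Time derivative `γ_t`. -/
def dT (γ : ℝ → ℝ → E2) (x t : ℝ) : E2 := deriv (fun s => γ x s) t

/-- Unit tangent vector `τ = γ_x/|γ_x|`. -/
def tangent (γ : ℝ → ℝ → E2) (x t : ℝ) : E2 := ‖dX γ x t‖⁻¹ • dX γ x t

/-- Unit normal vector `ν = R τ`. -/
def normal (γ : ℝ → ℝ → E2) (x t : ℝ) : E2 := rot (tangent γ x t)

/-- Curvature `k = ⟨γ_xx, ν⟩/|γ_x|²`. -/
def curv (γ : ℝ → ℝ → E2) (x t : ℝ) : ℝ :=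
  (inner ℝ (dXX γ x t) (normal γ x t) : ℝ) / ‖dX γ x t‖ ^ 2

/-- Tangential velocity `λ = ⟨γ_xx, τ⟩/|γ_x|²`. -/
def tanVel (γ : ℝ → ℝ → E2) (x t : ℝ) : ℝ :=
  (inner ℝ (dXX γ x t) (tangent γ x t) : ℝ) / ‖dX γ x t‖ ^ 2

/-- Arclength derivative `∂_s f = |γ_x|⁻¹ ∂_x f` of a function along the evolving curve. -/
def dS (γ : ℝ → ℝ → E2) (f : ℝ → ℝ → ℝ) (x t : ℝ) : ℝ :=
  ‖dX γ x t‖⁻¹ * deriv (fun y => f y t) x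

/-- A one-parameter family of triods `𝕋_t = ⋃ᵢ γⁱ(·,t)` evolving by curvature in `Ω`
over the set of times `J`, with fixed endpoints `P i ∈ ∂Ω`: the curves are `C²` in space
and `C¹` in time, regular, embedded, meet `∂Ω` exactly at the fixed endpoints, intersect
each other only at the common 3-point where the unit tangents sum to zero
(120-degree condition), and they move with velocity `γ_xx/|γ_x|²`. -/
structure IsTriodFlow (Ω : Set E2) (P : Fin 3 → E2)
    (γ : Fin 3 → ℝ → ℝ → E2) (J : Set ℝ) : Prop where
  smooth_x : ∀ i, ∀ t ∈ J, ContDiffOn ℝ 2 (fun x => γ i x t) (Icc 0 1)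
  smooth_t : ∀ i, ∀ x ∈ Icc (0:ℝ) 1, ContDiffOn ℝ 1 (fun s => γ i x s) J
  regular : ∀ i, ∀ x ∈ Icc (0:ℝ) 1, ∀ t ∈ J, dX (γ i) x t ≠ 0
  maps_to : ∀ i, ∀ x ∈ Icc (0:ℝ) 1, ∀ t ∈ J, γ i x t ∈ closure Ω
  boundary : ∀ i, ∀ x ∈ Icc (0:ℝ) 1, ∀ t ∈ J, (γ i x t ∈ frontier Ω ↔ x = 1)
  endpoint : ∀ i, ∀ t ∈ J, γ i 1 t = P i
  simple : ∀ i, ∀ t ∈ J, InjOn (fun x => γ i x t) (Icc 0 1)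
  pairwise : ∀ i j, i ≠ j → ∀ t ∈ J, ∀ x ∈ Icc (0:ℝ) 1, ∀ y ∈ Icc (0:ℝ) 1,
    γ i x t = γ j y t → x = 0 ∧ y = 0
  junction : ∀ i j, ∀ t ∈ J, γ i 0 t = γ j 0 t
  angle : ∀ t ∈ J, ∑ i : Fin 3, tangent (γ i) 0 t = 0
  motion : ∀ i, ∀ x ∈ Icc (0:ℝ) 1, ∀ t ∈ J,
    dT (γ i) x t = (‖dX (γ i) x t‖ ^ 2)⁻¹ • dXX (γ i) x t

/-- Length of one evolving curve at time `t`. -/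
def curveLength (γ : ℝ → ℝ → E2) (t : ℝ) : ℝ := ∫ x in (0:ℝ)..1, ‖dX γ x t‖

/-- The triod `𝕋_t` as a subset of the plane. -/
def triodSet (γ : Fin 3 → ℝ → ℝ → E2) (t : ℝ) : Set E2 :=
  ⋃ i : Fin 3, (fun x => γ i x t) '' Icc (0:ℝ) 1

/-- The original time `t(𝔱) = T − e^{−2𝔱}` corresponding to the rescaled time `𝔱`. -/
def origTime (T 𝔱 : ℝ) : ℝ := T - Real.exp (-(2 * 𝔱))

/-- Huisken's parabolic rescaling of one curve of the flow around the point `x₀`: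
`F̃_{x₀}(x,𝔱) = (F(x, t(𝔱)) − x₀)/√(2(T−t(𝔱)))`, with `t(𝔱) = T − e^{−2𝔱}`. -/
def rescCurve (γ : ℝ → ℝ → E2) (x₀ : E2) (T : ℝ) : ℝ → ℝ → E2 :=
  fun x 𝔱 => (Real.sqrt (2 * Real.exp (-(2 * 𝔱))))⁻¹ • (γ x (origTime T 𝔱) - x₀)

/-- The rescaled endpoint `P̃ⁱ_{x₀,𝔱} = (Pⁱ − x₀)/√(2(T−t(𝔱)))`. -/
def rescPoint (p x₀ : E2) (𝔱 : ℝ) : E2 := (Real.sqrt (2 * Real.exp (-(2 * 𝔱))))⁻¹ • (p - x₀)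

/-- The static Gaussian weight `ρ̃(x) = e^{−|x|²/2}`. -/
def gaussWeight (x : E2) : ℝ := Real.exp (-‖x‖ ^ 2 / 2)

/-- The integral `∫_{𝕋̃_{x₀,𝔱}} ρ̃ dσ` of the Gaussian weight over the rescaled triod. -/
def rescGaussIntegral (γ : Fin 3 → ℝ → ℝ → E2) (x₀ : E2) (T 𝔱 : ℝ) : ℝ :=
  ∑ i : Fin 3, ∫ x in (0:ℝ)..1,
    gaussWeight (rescCurve (γ i) x₀ T x 𝔱) * ‖dX (rescCurve (γ i) x₀ T) x 𝔱‖

/-- The boundary term of the rescaled monotonicity formula at the endpoint `Pⁱ`: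
`⟨P̃ⁱ_{x₀,ξ}, τⁱ(1,t(ξ))⟩ ρ̃(P̃ⁱ_{x₀,ξ})`. -/
def rescBoundaryTerm (γ : Fin 3 → ℝ → ℝ → E2) (P : Fin 3 → E2) (T : ℝ) (x₀ : E2)
    (i : Fin 3) (ξ : ℝ) : ℝ :=
  (inner ℝ (rescPoint (P i) x₀ ξ) (tangent (γ i) 1 (origTime T ξ)) : ℝ) *
    gaussWeight (rescPoint (P i) x₀ ξ)


/-! Since `|τ| ≤ 1` and `|P̃ⁱ_{x₀,ξ}| = c e^ξ` with `c = |Pⁱ − x₀|/√2`, the boundary term is bounded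
by `c e^ξ e^{-(c e^ξ)²/2}`. The substitution `u = c e^ξ` turns the integral of this bound over
`(𝔱, ∞)` into the Gaussian tail `∫_{c e^𝔱}^∞ e^{-u²/2} du`, which is at most
`∫_0^∞ e^{-u²/2} du = √(π/2)` and, when `c > 0`, tends to `0` as `𝔱 → ∞`. -/

def gaussTail (b : ℝ) : ℝ := ∫ u in Ioi b, Real.exp (-u ^ 2 / 2)

lemma exp_neg_sq_div_two_eq (u : ℝ) : Real.exp (-u ^ 2 / 2) = Real.exp (-(1 / 2) * u ^ 2) := by
  ring_nf

lemma integrable_exp_neg_sq_div_two : Integrable fun u : ℝ => Real.exp (-u ^ 2 / 2) := by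
  simpa only [exp_neg_sq_div_two_eq] using integrable_exp_neg_mul_sq (by norm_num : (0:ℝ) < 1 / 2)

lemma gaussTail_zero : gaussTail 0 = Real.sqrt (π / 2) := by
  rw [gaussTail, funext exp_neg_sq_div_two_eq, integral_gaussian_Ioi,
    show π / (1 / 2) = 2 ^ 2 * (π / 2) by ring, Real.sqrt_mul' _ (by positivity),
    Real.sqrt_sq zero_le_two]
  ring

lemma gaussTail_nonneg (b : ℝ) : 0 ≤ gaussTail b :=
  setIntegral_nonneg measurableSet_Ioi fun _ _ => (Real.exp_pos _).le

lemma gaussTail_le_sqrt {b : ℝ} (hb : 0 ≤ b) : gaussTail b ≤ Real.sqrt (π / 2) := by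
  rw [← gaussTail_zero]
  exact setIntegral_mono_set integrable_exp_neg_sq_div_two.integrableOn
    (.of_forall fun _ => (Real.exp_pos _).le) (Ioi_subset_Ioi hb).eventuallyLE

lemma tendsto_gaussTail_atTop : Tendsto gaussTail atTop (𝓝 0) := by
  have h := tendsto_setIntegral_of_antitone (μ := volume) (fun b : ℝ => measurableSet_Ioi)
    (fun _ _ hab => Ioi_subset_Ioi hab) ⟨0, integrable_exp_neg_sq_div_two.integrableOn⟩
  rwa [show (⋂ b : ℝ, Ioi b) = ∅ from iInter_eq_empty_iff.2 fun u => ⟨u, lt_irrefl u⟩,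
    setIntegral_empty] at h

lemma image_const_mul_exp_Ioi {c : ℝ} (hc : 0 < c) (a : ℝ) :
    (fun ξ => c * Real.exp ξ) '' Ioi a = Ioi (c * Real.exp a) := by
  rw [← image_mul_left_Ioi hc, ← Real.image_exp_Ioi, image_image]

lemma hasDerivWithinAt_const_mul_exp (c : ℝ) (s : Set ℝ) (ξ : ℝ) :
    HasDerivWithinAt (fun ξ => c * Real.exp ξ) (c * Real.exp ξ) s ξ :=
  ((Real.hasDerivAt_exp ξ).const_mul c).hasDerivWithinAt

lemma injective_const_mul_exp {c : ℝ} (hc : 0 < c) :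
    Function.Injective fun ξ => c * Real.exp ξ :=
  fun _ _ h => Real.exp_injective (mul_left_cancel₀ hc.ne' h)

lemma integrableOn_Ioi_comp_const_mul_exp_iff {c : ℝ} (hc : 0 < c) (g : ℝ → ℝ) (a : ℝ) :
    IntegrableOn (fun ξ => g (c * Real.exp ξ) * (c * Real.exp ξ)) (Ioi a) ↔
      IntegrableOn g (Ioi (c * Real.exp a)) := by
  rw [← image_const_mul_exp_Ioi hc, integrableOn_image_iff_integrableOn_abs_deriv_smul
    measurableSet_Ioi (fun ξ _ => hasDerivWithinAt_const_mul_exp c _ ξ)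
    (injective_const_mul_exp hc).injOn]
  refine integrableOn_congr_fun (fun ξ _ => ?_) measurableSet_Ioi
  rw [smul_eq_mul, abs_of_pos (by positivity), mul_comm]

lemma setIntegral_Ioi_comp_const_mul_exp {c : ℝ} (hc : 0 < c) (g : ℝ → ℝ) (a : ℝ) :
    ∫ ξ in Ioi a, g (c * Real.exp ξ) * (c * Real.exp ξ) = ∫ u in Ioi (c * Real.exp a), g u := by
  rw [← image_const_mul_exp_Ioi hc, integral_image_eq_integral_abs_deriv_smul
    measurableSet_Ioi (fun ξ _ => hasDerivWithinAt_const_mul_exp c _ ξ)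
    (injective_const_mul_exp hc).injOn]
  refine setIntegral_congr_fun measurableSet_Ioi (fun ξ _ => ?_)
  rw [smul_eq_mul, abs_of_pos (by positivity), mul_comm]

lemma abs_setIntegral_Ioi_le_gaussTail {f : ℝ → ℝ} {c : ℝ} (hc : 0 ≤ c)
    (hf : ∀ ξ, |f ξ| ≤ Real.exp (-(c * Real.exp ξ) ^ 2 / 2) * (c * Real.exp ξ)) (a : ℝ) :
    |∫ ξ in Ioi a, f ξ| ≤ gaussTail (c * Real.exp a) := by
  rcases hc.eq_or_lt with rfl | hc
  · have hf0 : f = 0 := funext fun ξ => abs_nonpos_iff.1 (by simpa using hf ξ)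
    simpa [hf0] using gaussTail_nonneg _
  · rw [gaussTail, ← setIntegral_Ioi_comp_const_mul_exp hc (fun u => Real.exp (-u ^ 2 / 2))]
    have hg := (integrableOn_Ioi_comp_const_mul_exp_iff hc _ a).2
      integrable_exp_neg_sq_div_two.integrableOn
    simp only [← Real.norm_eq_abs] at hf ⊢
    exact norm_integral_le_of_norm_le hg (.of_forall hf)

lemma norm_tangent_le_one (γ : ℝ → ℝ → E2) (x t : ℝ) : ‖tangent γ x t‖ ≤ 1 := by
  rcases eq_or_ne (dX γ x t) 0 with h | h
  · simp [tangent, h]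
  · rw [tangent, norm_smul, norm_inv, norm_norm, inv_mul_cancel₀ (norm_ne_zero_iff.2 h)]

lemma norm_rescPoint (p x₀ : E2) (ξ : ℝ) :
    ‖rescPoint p x₀ ξ‖ = ‖p - x₀‖ / Real.sqrt 2 * Real.exp ξ := by
  have hsqrt : Real.sqrt (2 * Real.exp (-(2 * ξ))) = Real.sqrt 2 * Real.exp (-ξ) := by
    rw [show -(2 * ξ) = -ξ + -ξ by ring, Real.exp_add, ← sq,
      Real.sqrt_mul zero_le_two, Real.sqrt_sq (Real.exp_nonneg _)]
  rw [rescPoint, norm_smul, Real.norm_eq_abs, hsqrt, abs_of_nonneg (by positivity), mul_inv,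
    Real.exp_neg, inv_inv]
  ring

lemma abs_rescBoundaryTerm_le (γ : Fin 3 → ℝ → ℝ → E2) (P : Fin 3 → E2) (T : ℝ) (x₀ : E2)
    (i : Fin 3) (ξ : ℝ) :
    |rescBoundaryTerm γ P T x₀ i ξ| ≤
      Real.exp (-(‖P i - x₀‖ / Real.sqrt 2 * Real.exp ξ) ^ 2 / 2) *
        (‖P i - x₀‖ / Real.sqrt 2 * Real.exp ξ) := by
  have hinner : |inner ℝ (rescPoint (P i) x₀ ξ) (tangent (γ i) 1 (origTime T ξ))|
      ≤ ‖P i - x₀‖ / Real.sqrt 2 * Real.exp ξ :=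
    calc _ ≤ ‖rescPoint (P i) x₀ ξ‖ * ‖tangent (γ i) 1 (origTime T ξ)‖ :=
          abs_real_inner_le_norm _ _
      _ ≤ ‖rescPoint (P i) x₀ ξ‖ :=
          mul_le_of_le_one_right (norm_nonneg _) (norm_tangent_le_one _ _ _)
      _ = _ := norm_rescPoint _ _ _
  rw [rescBoundaryTerm, gaussWeight, abs_mul, abs_of_pos (Real.exp_pos _), norm_rescPoint,
    mul_comm]
  exact mul_le_mul_of_nonneg_left hinner (Real.exp_nonneg _)

theorem rescaled_boundary_term_estimate_general
    (P : Fin 3 → E2) (T : ℝ)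
    (γ : Fin 3 → ℝ → ℝ → E2)
    (x₀ : E2) :
    (∀ i : Fin 3, ∀ 𝔱 : ℝ,
      |∫ ξ in Ioi 𝔱, rescBoundaryTerm γ P T x₀ i ξ| ≤ Real.sqrt (π / 2)) ∧
    ((∀ i, x₀ ≠ P i) →
      Tendsto (fun 𝔱 => ∑ i : Fin 3, ∫ ξ in Ioi 𝔱, rescBoundaryTerm γ P T x₀ i ξ)
        atTop (𝓝 0)) := by
  have hbound (i : Fin 3) (𝔱 : ℝ) : |∫ ξ in Ioi 𝔱, rescBoundaryTerm γ P T x₀ i ξ| ≤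
      gaussTail (‖P i - x₀‖ / Real.sqrt 2 * Real.exp 𝔱) :=
    abs_setIntegral_Ioi_le_gaussTail (by positivity) (abs_rescBoundaryTerm_le γ P T x₀ i) 𝔱
  refine ⟨fun i 𝔱 => (hbound i 𝔱).trans (gaussTail_le_sqrt (by positivity)), fun hx₀ => ?_⟩
  have htail (i : Fin 3) :
      Tendsto (fun 𝔱 => ∫ ξ in Ioi 𝔱, rescBoundaryTerm γ P T x₀ i ξ) atTop (𝓝 0) := by
    have hc : 0 < ‖P i - x₀‖ / Real.sqrt 2 := by
      have := sub_ne_zero.2 (hx₀ i).symm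
      positivity
    exact squeeze_zero_norm (hbound i)
      (tendsto_gaussTail_atTop.comp (Real.tendsto_exp_atTop.const_mul_atTop hc))
  simpa using tendsto_finsetSum Finset.univ fun i _ => htail i

/-- Let `𝕋_t` be a triod evolving by curvature on `[0,T)` with fixed
endpoints `P¹,P²,P³`, and fix `x₀ ∈ ℝ²`. With `P̃ⁱ_{x₀,𝔱} = (Pⁱ−x₀)/√(2(T−t(𝔱)))`,
`t(𝔱) = T − e^{−2𝔱}` and `ρ̃(x) = e^{−|x|²/2}`, for every `i` and every `𝔱`,
`|∫_𝔱^∞ ⟨P̃ⁱ_{x₀,ξ}, τⁱ(1,t(ξ))⟩ ρ̃(P̃ⁱ_{x₀,ξ}) dξ| ≤ √(π/2)` (for every `x₀`);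
consequently, for every `x₀` with `x₀ ≠ Pⁱ` for all `i`,
`lim_{𝔱→∞} Σᵢ ∫_𝔱^∞ ⟨P̃ⁱ_{x₀,ξ}, τⁱ(1,t(ξ))⟩ ρ̃(P̃ⁱ_{x₀,ξ}) dξ = 0`. -/
theorem rescaled_boundary_term_estimate
    (Ω : Set E2) (P : Fin 3 → E2) (T : ℝ) (hT : 0 < T)
    (γ : Fin 3 → ℝ → ℝ → E2)
    (hflow : IsTriodFlow Ω P γ (Ico 0 T))
    (x₀ : E2) :
    (∀ i : Fin 3, ∀ 𝔱 : ℝ,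
      |∫ ξ in Ioi 𝔱, rescBoundaryTerm γ P T x₀ i ξ| ≤ Real.sqrt (π / 2)) ∧
    ((∀ i, x₀ ≠ P i) →
      Tendsto (fun 𝔱 => ∑ i : Fin 3, ∫ ξ in Ioi 𝔱, rescBoundaryTerm γ P T x₀ i ξ)
        atTop (𝓝 0)) :=
  rescaled_boundary_term_estimate_general P T γ x₀
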